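/- Let K be a local field of characteristic p with valuation ring O_K, maximal ideal m_K, and finite residue field k embedded in O_K. Let f = ∑_{i=0}^d f_i τ^i with all f_i ∈ O_K, f_d ∈ O_K^×, and d > 0, and let f̄ = ∑_{i=0}^d f̄_i τ^i where f̄_i ∈ k ⊂ O_K is the residue of f_i. Then there exists a unique element x = ∑_{j≤0} x_j τ^j with all x_j ∈ O_K and x ≡ 1 modulo m_K such that f x = x f̄ in the twisted Laurent series ring. -/

import Mathlib

/-!
STATEMENT 3: Let `K` be a local field of characteristic `p` with finite residue field `k`,
modelled as `K = k((t)) = LaurentSeries k`, with normalized additive valuation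
`v = HahnSeries.orderTop`; the canonical section `k ↪ O_K` is `HahnSeries.C`, and the residue of
an integral element is its `0`-th coefficient.  Let `f = ∑_{i=0}^d f_i τ^i` with `f_i ∈ O_K`,
`f_d ∈ O_K^×` and `d > 0`, and let `f̄_i ∈ k ⊆ O_K` be the residues.  Then there is a unique
`x = ∑_{j ≤ 0} x_j τ^j` with all `x_j ∈ O_K` and `x ≡ 1 mod m_K` such that `f x = x f̄` in the
twisted Laurent series ring (`τ z = z^p τ`).  A series in nonpositive powers of `τ` is recorded
by its coefficients `x : ℕ → K` (`x n` = coefficient of `τ^{-n}`), and the identity `f x = x f̄`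
is spelled out coefficientwise: the coefficient of `τ^{d - m}` of `f x - x f̄` vanishes for
every `m : ℕ`; the terms `f̄_i^{p^j}` for `j ≤ 0` use the inverse Frobenius of the finite
(hence perfect) field `k`.
-/

/-- The coefficient of `τ^{d-m}` in `f x - x f̄`, where `x = ∑_{n≥0} x_n τ^{-n}`:
`∑_{i+j = d-m, 0 ≤ i ≤ d, j ≤ 0} (f_i x_j^{p^i} - x_j f̄_i^{p^j})`, with `j = d - m - i ≤ 0`
written as `-(m + i - d)`. -/
noncomputable def conjEqCoeff (p : ℕ) [Fact p.Prime] {k : Type*} [Field k] [Fintype k]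
    [CharP k p] (d : ℕ) (f : ℕ → LaurentSeries k) (x : ℕ → LaurentSeries k) (m : ℕ) :
    LaurentSeries k :=
  ∑ i ∈ (Finset.range (d + 1)).filter (fun i => d ≤ m + i),
    (f i * (x (m + i - d)) ^ (p ^ i) -
      x (m + i - d) * HahnSeries.C ((⇑(frobeniusEquiv k p).symm)^[m + i - d] ((f i).coeff 0)))

/-!
Comparing coefficients of `τ^{d-m}` in `f x = x f̄` gives one equation for each `m`, whose only
unknown besides `x_0, …, x_{m-1}` is `x_m`, entering through `f_d x_m^{p^d} - x_m f̄_d^{p^{-m}}`.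
Write `x_m = δ_{m0} + z`. Since `y ↦ f_i y^{p^i} - y c` is additive in characteristic `p`, and
`f_i ≡ f̄_i`, `x_j ≡ δ_{j0}` modulo `m_K`, the equation becomes `z = a + b z^{p^d}` with
`a ∈ m_K` and `b ∈ O_K`. As `d > 0`, `z ↦ a + b z^{p^d}` is a contraction of `m_K`, so `z` exists
and is unique; the solution is then built by recursion on `m`.
-/

theorem WithTop.int_one_le_iff_pos {x : WithTop ℤ} : 1 ≤ x ↔ 0 < x := by
  cases x with
  | top => simp
  | coe a => norm_cast

namespace LaurentSeries

variable {R : Type*}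

instance [CommRing R] (p : ℕ) [CharP R p] : CharP (LaurentSeries R) p :=
  charP_of_injective_ringHom HahnSeries.C_injective p

theorem orderTop_pos_add [AddMonoid R] {x y : LaurentSeries R} (hx : 0 < x.orderTop)
    (hy : 0 < y.orderTop) : 0 < (x + y).orderTop :=
  (lt_min hx hy).trans_le HahnSeries.min_orderTop_le_orderTop_add

theorem orderTop_sub_C_coeff_zero_pos [Ring R] {x : LaurentSeries R} (hx : 0 ≤ x.orderTop) :
    0 < (x - HahnSeries.C (x.coeff 0)).orderTop := by
  rw [← WithTop.int_one_le_iff_pos, HahnSeries.le_orderTop_iff_forall]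
  intro j hj
  rw [HahnSeries.coeff_sub, HahnSeries.C_apply, HahnSeries.coeff_single]
  rcases eq_or_ne j 0 with rfl | hj0
  · simp
  · have hj : j < 1 := by exact_mod_cast hj
    have hj : (j : WithTop ℤ) < 0 := by exact_mod_cast (show j < 0 by omega)
    rw [if_neg hj0, sub_zero, HahnSeries.coeff_eq_zero_of_lt_orderTop (hj.trans_le hx)]

theorem eq_zero_of_forall_natCast_le_orderTop [Zero R] {x : LaurentSeries R}
    (h : ∀ n : ℕ, (n : WithTop ℤ) ≤ x.orderTop) : x = 0 := by
  rw [← HahnSeries.orderTop_eq_top]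
  cases hx : x.orderTop with
  | top => rfl
  | coe g =>
    have := h (g.toNat + 1)
    rw [hx, ← WithTop.coe_natCast, WithTop.coe_le_coe] at this
    omega

theorem natCast_succ_le_orderTop_mul_pow [Ring R] {b u : LaurentSeries R} {q m : ℕ}
    (hb : 0 ≤ b.orderTop) (hq : 2 ≤ q) (hm : 1 ≤ m) (hu : (m : WithTop ℤ) ≤ u.orderTop) :
    ((m + 1 : ℕ) : WithTop ℤ) ≤ (b * u ^ q).orderTop :=
  calc ((m + 1 : ℕ) : WithTop ℤ) ≤ (q * m : ℕ) := by gcongr; nlinarith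
    _ = 0 + q • (m : WithTop ℤ) := by simp [← WithTop.coe_natCast, ← WithTop.coe_nsmul]
    _ ≤ b.orderTop + q • u.orderTop := by gcongr
    _ ≤ b.orderTop + (u ^ q).orderTop := by
      gcongr; exact HahnSeries.orderTop_nsmul_le_orderTop_pow
    _ ≤ (b * u ^ q).orderTop := HahnSeries.orderTop_add_le_mul

theorem natCast_le_orderTop_sub_of_le [AddGroup R] {s : ℕ → LaurentSeries R}
    (hs : ∀ n : ℕ, (n : WithTop ℤ) ≤ (s (n + 1) - s n).orderTop) {n m : ℕ} (hnm : n ≤ m) :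
    (n : WithTop ℤ) ≤ (s m - s n).orderTop := by
  induction m, hnm using Nat.le_induction with
  | base => simp
  | succ m hnm ih =>
    rw [← sub_add_sub_cancel]
    exact le_trans (le_min ((Nat.cast_le.2 hnm).trans (hs m)) ih)
      HahnSeries.min_orderTop_le_orderTop_add

theorem exists_natCast_le_orderTop_sub [AddGroup R] (s : ℕ → LaurentSeries R)
    (hs : ∀ n : ℕ, (n : WithTop ℤ) ≤ (s (n + 1) - s n).orderTop) :
    ∃ z : LaurentSeries R, ∀ n : ℕ, (n : WithTop ℤ) ≤ (z - s n).orderTop := by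
  have hcoeff : ∀ (n m : ℕ) (j : ℤ), j < n → j < m → (s m).coeff j = (s n).coeff j := by
    intro n m j hn hm
    wlog hnm : n ≤ m generalizing n m
    · exact (this m n hm hn (by omega)).symm
    have := HahnSeries.coeff_eq_zero_of_lt_orderTop
      ((WithTop.coe_lt_coe.2 hn).trans_le (natCast_le_orderTop_sub_of_le hs hnm))
    rwa [HahnSeries.coeff_sub, sub_eq_zero] at this
  let c : ℤ → R := fun j => (s (j.toNat + 1)).coeff j
  have hc : ∀ (n : ℕ) (j : ℤ), j < n → c j = (s n).coeff j := fun n j hj =>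
    hcoeff n _ j hj (by omega)
  have hbdd : BddBelow c.support := by
    refine ⟨min 0 (s 0).order, fun j hj => ?_⟩
    by_contra! hlt
    rw [Function.mem_support, hc 0 j (by omega)] at hj
    exact hj (HahnSeries.coeff_eq_zero_of_lt_order (by omega))
  refine ⟨HahnSeries.ofSuppBddBelow c hbdd, fun n => ?_⟩
  rw [HahnSeries.le_orderTop_iff_forall]
  intro j hj
  rw [HahnSeries.coeff_sub, HahnSeries.ofSuppBddBelow_coeff, hc n j (by exact_mod_cast hj),
    sub_self]

/-- `F z = a + b z^q` satisfies `F u - F v = b (u - v)^q` in characteristic `p`, so it contracts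
the maximal ideal and its iterates from `0` converge. -/
theorem existsUnique_orderTop_pos_eq_add_mul_pow [CommRing R] {p : ℕ} [Fact p.Prime] [CharP R p]
    {e : ℕ} (he : e ≠ 0) {a b : LaurentSeries R} (ha : 0 < a.orderTop) (hb : 0 ≤ b.orderTop) :
    ∃! z : LaurentSeries R, 0 < z.orderTop ∧ z = a + b * z ^ p ^ e := by
  set F : LaurentSeries R → LaurentSeries R := fun z => a + b * z ^ p ^ e with hF
  have hq : 2 ≤ p ^ e := (Fact.out : p.Prime).two_le.trans (Nat.le_self_pow he p)
  have contract : ∀ {m : ℕ} {u v : LaurentSeries R}, 1 ≤ m →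
      (m : WithTop ℤ) ≤ (u - v).orderTop → ((m + 1 : ℕ) : WithTop ℤ) ≤ (F u - F v).orderTop :=
    fun {m u v} hm huv => by
      have : F u - F v = b * (u - v) ^ p ^ e := by simp only [hF, sub_pow_char_pow]; ring
      exact this ▸ natCast_succ_le_orderTop_mul_pow hb hq hm huv
  have cast_le : ∀ n : ℕ, (n : WithTop ℤ) ≤ (n + 1 : ℕ) := fun n => by exact_mod_cast n.le_succ
  set s : ℕ → LaurentSeries R := fun n => F^[n] 0 with hs
  have hs_succ : ∀ n, s (n + 1) = F (s n) := fun n => Function.iterate_succ_apply' F n 0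
  have hs_one : s 1 = a := by
    simp [hs, hF, zero_pow (pow_ne_zero e (Fact.out : p.Prime).ne_zero)]
  have hs_diff : ∀ n : ℕ, ((n + 1 : ℕ) : WithTop ℤ) ≤ (s (n + 1) - s n).orderTop := by
    intro n
    induction n with
    | zero =>
      rw [hs_one, show s 0 = 0 from rfl, sub_zero]
      exact_mod_cast WithTop.int_one_le_iff_pos.2 ha
    | succ n ih =>
      have := contract (by omega) ih
      rwa [← hs_succ, ← hs_succ] at this
  obtain ⟨z, hz⟩ := exists_natCast_le_orderTop_sub s fun n => (cast_le n).trans (hs_diff n)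
  have hz_pos : 0 < z.orderTop := by
    have hz_one : (1 : WithTop ℤ) ≤ (z - a).orderTop := by exact_mod_cast hs_one ▸ hz 1
    rw [← WithTop.int_one_le_iff_pos, ← sub_add_cancel z a]
    exact le_trans (le_min hz_one (WithTop.int_one_le_iff_pos.2 ha))
      HahnSeries.min_orderTop_le_orderTop_add
  have hz_fixed : z = F z := by
    refine sub_eq_zero.1 (eq_zero_of_forall_natCast_le_orderTop fun n => (cast_le n).trans ?_)
    have hsplit : z - F z = (z - s (n + 2)) + (F (s (n + 1)) - F z) := by rw [hs_succ]; ring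
    have hnear : ((n + 1 : ℕ) : WithTop ℤ) ≤ (s (n + 1) - z).orderTop := by
      rw [← HahnSeries.orderTop_neg, neg_sub]; exact hz (n + 1)
    rw [hsplit]
    exact le_trans (le_min ((cast_le _).trans (hz (n + 2))) ((cast_le _).trans
      (contract (by omega) hnear))) HahnSeries.min_orderTop_le_orderTop_add
  refine ⟨z, ⟨hz_pos, hz_fixed⟩, fun y ⟨hy_pos, hy_fixed⟩ => ?_⟩
  have hyz : ∀ n : ℕ, ((n + 1 : ℕ) : WithTop ℤ) ≤ (y - z).orderTop := by
    intro n
    induction n with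
    | zero =>
      exact le_trans (le_min (by simpa using WithTop.int_one_le_iff_pos.2 hy_pos)
        (by simpa using WithTop.int_one_le_iff_pos.2 hz_pos))
        HahnSeries.min_orderTop_le_orderTop_sub
    | succ n ih => rw [hy_fixed, hz_fixed]; exact contract (by omega) ih
  exact sub_eq_zero.1 (eq_zero_of_forall_natCast_le_orderTop fun n => (cast_le n).trans (hyz n))

theorem forall_orderTop_sub_single_pos_iff [Ring R] (x : ℕ → LaurentSeries R) :
    (∀ n, 0 < (x n - (Pi.single 0 1 : ℕ → LaurentSeries R) n).orderTop) ↔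
      (∀ n, 0 ≤ (x n).orderTop) ∧ 0 < (x 0 - 1).orderTop ∧ ∀ n, 0 < n → 0 < (x n).orderTop := by
  constructor
  · intro h
    refine ⟨fun n => ?_, by simpa using h 0, fun n hn => by simpa [hn.ne'] using h n⟩
    have hsingle : 0 ≤ ((Pi.single 0 1 : ℕ → LaurentSeries R) n).orderTop := by
      rcases eq_or_ne n 0 with rfl | hn
      · rw [Pi.single_eq_same, ← HahnSeries.C_one, HahnSeries.C_apply]
        exact HahnSeries.orderTop_single_le
      · simp [hn]
    rw [← sub_add_cancel (x n) ((Pi.single 0 1 : ℕ → LaurentSeries R) n)]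
    exact (le_min (h n).le hsingle).trans HahnSeries.min_orderTop_le_orderTop_add
  · rintro ⟨-, h0, hpos⟩ n
    rcases eq_or_ne n 0 with rfl | hn
    · simpa using h0
    · simpa [hn] using hpos n (Nat.pos_of_ne_zero hn)

end LaurentSeries

theorem Nat.existsUnique_forall_of_existsUnique_update {α : Type*} [Nonempty α]
    (P : ℕ → (ℕ → α) → Prop) (hloc : ∀ m x y, (∀ j ≤ m, x j = y j) → P m x → P m y)
    (hstep : ∀ m x, (∀ j < m, P j x) → ∃! v, P m (Function.update x m v)) :
    ∃! x : ℕ → α, ∀ m, P m x := by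
  classical
  let extend (m : ℕ) (prev : ∀ j < m, α) : ℕ → α := fun j =>
    if h : j < m then prev j h else Classical.arbitrary α
  let x : ℕ → α := Nat.strongRec fun m prev =>
    Classical.epsilon fun v => P m (Function.update (extend m prev) m v)
  have hx : ∀ m, P m x := by
    intro m
    induction m using Nat.strong_induction_on with
    | _ m ih =>
    set y := extend m fun j _ => x j
    have hy : ∀ j < m, y j = x j := fun j hj => dif_pos hj
    have hPy : ∀ j < m, P j y := fun j hj =>
      hloc j x y (fun i hi => (hy i (by omega)).symm) (ih j hj)
    have hxm : P m (Function.update y m (x m)) := by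
      rw [show x m = _ from Nat.strongRec_eq _ m]
      exact Classical.epsilon_spec (hstep m y hPy).exists
    refine hloc m _ x (fun j hj => ?_) hxm
    rcases hj.lt_or_eq with hj | rfl
    · rw [Function.update_of_ne hj.ne, hy j hj]
    · exact Function.update_self ..
  refine ⟨x, hx, fun y hy => funext fun m => ?_⟩
  induction m using Nat.strong_induction_on with
  | _ m ih =>
  refine (hstep m y (fun j _ => hy j)).unique (by rw [Function.update_eq_self]; exact hy m) ?_
  refine hloc m x _ (fun j hj => ?_) (hx m)
  rcases hj.lt_or_eq with hj | rfl
  · rw [Function.update_of_ne hj.ne, ih j hj]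
  · exact (Function.update_self j (x j) y).symm

open LaurentSeries

section

variable (p : ℕ) [Fact p.Prime] {k : Type*} [Field k] [Fintype k] [CharP k p]

/-- The contribution `f_i y^{p^i} - y f̄_i^{p^{-j}}` of `f_i τ^i` and `y τ^{-j}` to `f x - x f̄`. -/
noncomputable def conjTerm (f : ℕ → LaurentSeries k) (i j : ℕ) (y : LaurentSeries k) :
    LaurentSeries k :=
  f i * y ^ p ^ i - y * HahnSeries.C ((⇑(frobeniusEquiv k p).symm)^[j] ((f i).coeff 0))

variable {p} {d : ℕ} {f : ℕ → LaurentSeries k}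

theorem conjTerm_add (i j : ℕ) (y z : LaurentSeries k) :
    conjTerm p f i j (y + z) = conjTerm p f i j y + conjTerm p f i j z := by
  simp only [conjTerm, add_pow_char_pow]
  ring

theorem conjTerm_zero (i j : ℕ) : conjTerm p f i j 0 = 0 := by
  simp [conjTerm, zero_pow (pow_ne_zero i (Fact.out : p.Prime).ne_zero)]

theorem orderTop_conjTerm_pos {i j : ℕ} (hf : 0 ≤ (f i).orderTop) {y : LaurentSeries k}
    (hy : 0 < (y - (Pi.single 0 1 : ℕ → LaurentSeries k) j).orderTop) :
    0 < (conjTerm p f i j y).orderTop := by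
  rw [← sub_add_cancel y ((Pi.single 0 1 : ℕ → LaurentSeries k) j), add_comm, conjTerm_add]
  refine orderTop_pos_add ?_ ?_
  · rcases eq_or_ne j 0 with rfl | hj
    · simpa [conjTerm] using orderTop_sub_C_coeff_zero_pos hf
    · simp [hj, conjTerm_zero]
  · set z := y - (Pi.single 0 1 : ℕ → LaurentSeries k) j
    refine (lt_min ?_ ?_).trans_le HahnSeries.min_orderTop_le_orderTop_sub
    · calc (0 : WithTop ℤ) < 0 + p ^ i • z.orderTop := by
            rw [zero_add]; exact nsmul_pos hy (pow_ne_zero i (Fact.out : p.Prime).ne_zero)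
        _ ≤ (f i).orderTop + (z ^ p ^ i).orderTop :=
            add_le_add hf HahnSeries.orderTop_nsmul_le_orderTop_pow
        _ ≤ _ := HahnSeries.orderTop_add_le_mul
    · rw [mul_comm, HahnSeries.C_mul_eq_smul]
      exact hy.trans_le (HahnSeries.orderTop_le_orderTop_smul _ _)

theorem conjEqCoeff_eq_conjTerm_add_sum (x : ℕ → LaurentSeries k) (m : ℕ) :
    conjEqCoeff p d f x m = conjTerm p f d m (x m) +
      ∑ i ∈ (Finset.range d).filter (fun i => d ≤ m + i),
        conjTerm p f i (m + i - d) (x (m + i - d)) := by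
  rw [conjEqCoeff, Finset.range_add_one, Finset.filter_insert, if_pos (Nat.le_add_left d m),
    Finset.sum_insert (by simp), Nat.add_sub_cancel]
  rfl

theorem conjEqCoeff_congr {x y : ℕ → LaurentSeries k} {m : ℕ} (h : ∀ j ≤ m, x j = y j) :
    conjEqCoeff p d f x m = conjEqCoeff p d f y m := by
  refine Finset.sum_congr rfl fun i hi => ?_
  rw [Finset.mem_filter, Finset.mem_range] at hi
  rw [h (m + i - d) (by omega)]

theorem conjEqCoeff_update_add (x : ℕ → LaurentSeries k) (m : ℕ) (y z : LaurentSeries k) :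
    conjEqCoeff p d f (Function.update x m (y + z)) m =
      conjEqCoeff p d f (Function.update x m y) m + conjTerm p f d m z := by
  simp only [conjEqCoeff_eq_conjTerm_add_sum, Function.update_self, conjTerm_add]
  rw [add_right_comm]
  congr 2
  refine Finset.sum_congr rfl fun i hi => ?_
  rw [Finset.mem_filter, Finset.mem_range] at hi
  rw [Function.update_of_ne (by omega), Function.update_of_ne (by omega)]

theorem orderTop_conjEqCoeff_pos (hf : ∀ i, 0 ≤ (f i).orderTop) {x : ℕ → LaurentSeries k}
    {m : ℕ} (hx : ∀ j ≤ m, 0 < (x j - (Pi.single 0 1 : ℕ → LaurentSeries k) j).orderTop) :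
    0 < (conjEqCoeff p d f x m).orderTop := by
  refine Finset.sum_induction _ (fun s : LaurentSeries k => 0 < s.orderTop)
    (fun _ _ => orderTop_pos_add) (by simp) fun i hi => ?_
  rw [Finset.mem_filter, Finset.mem_range] at hi
  exact orderTop_conjTerm_pos (hf i) (hx _ (by omega))

theorem existsUnique_conjEqCoeff_update (hd : 0 < d) (hf : ∀ i, 0 ≤ (f i).orderTop)
    (hunit : (f d).orderTop = 0) {x : ℕ → LaurentSeries k} {m : ℕ}
    (hx : ∀ j < m, 0 < (x j - (Pi.single 0 1 : ℕ → LaurentSeries k) j).orderTop) :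
    ∃! v, 0 < (v - (Pi.single 0 1 : ℕ → LaurentSeries k) m).orderTop ∧
      conjEqCoeff p d f (Function.update x m v) m = 0 := by
  set δ := (Pi.single 0 1 : ℕ → LaurentSeries k) m
  set a := conjEqCoeff p d f (Function.update x m δ) m
  have ha : 0 < a.orderTop := orderTop_conjEqCoeff_pos hf fun j hj => by
    rcases hj.lt_or_eq with hj | rfl
    · rw [Function.update_of_ne hj.ne]; exact hx j hj
    · simp [δ]
  set γ := (⇑(frobeniusEquiv k p).symm)^[m] ((f d).coeff 0)
  have hγ : γ ≠ 0 := fun h => HahnSeries.coeff_orderTop_ne (by exact_mod_cast hunit)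
    ((frobeniusEquiv k p).symm.injective.iterate m
      (h.trans (Function.iterate_fixed (map_zero _) m).symm))
  have hC : HahnSeries.C γ⁻¹ * HahnSeries.C γ = (1 : LaurentSeries k) := by
    rw [← map_mul, inv_mul_cancel₀ hγ, map_one]
  have key : ∀ z, conjEqCoeff p d f (Function.update x m (δ + z)) m = 0 ↔
      z = HahnSeries.C γ⁻¹ * a + HahnSeries.C γ⁻¹ * f d * z ^ p ^ d := by
    intro z
    rw [conjEqCoeff_update_add, conjTerm]
    constructor <;> intro h
    · linear_combination -HahnSeries.C γ⁻¹ * h - z * hC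
    · linear_combination -HahnSeries.C γ * h - (a + f d * z ^ p ^ d) * hC
  have ha' : 0 < (HahnSeries.C γ⁻¹ * a).orderTop := by
    rw [HahnSeries.C_mul_eq_smul]; exact ha.trans_le (HahnSeries.orderTop_le_orderTop_smul _ _)
  have hb : 0 ≤ (HahnSeries.C γ⁻¹ * f d).orderTop := by
    rw [HahnSeries.C_mul_eq_smul]; exact (hf d).trans (HahnSeries.orderTop_le_orderTop_smul _ _)
  obtain ⟨z, ⟨hz, hz_eq⟩, hz_uniq⟩ := existsUnique_orderTop_pos_eq_add_mul_pow hd.ne' ha' hb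
  refine ⟨δ + z, ⟨by rwa [add_sub_cancel_left], (key z).2 hz_eq⟩, fun v ⟨hv, hv_eq⟩ => ?_⟩
  rw [← add_sub_cancel δ v] at hv_eq
  exact eq_add_of_sub_eq' (hz_uniq _ ⟨hv, (key _).1 hv_eq⟩)

end

theorem exists_unique_conjugating_series
    (p : ℕ) [Fact p.Prime] (k : Type*) [Field k] [Fintype k] [CharP k p]
    (d : ℕ) (hd : 0 < d) (f : ℕ → LaurentSeries k)
    (hint : ∀ i, 0 ≤ (f i).orderTop)
    (hunit : (f d).orderTop = 0) :
    ∃! x : ℕ → LaurentSeries k,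
      (∀ n, 0 ≤ (x n).orderTop) ∧
      0 < (x 0 - 1).orderTop ∧ (∀ n, 0 < n → 0 < (x n).orderTop) ∧
      ∀ m : ℕ, conjEqCoeff p d f x m = 0 := by
  refine (existsUnique_congr fun x => ?_).2 (Nat.existsUnique_forall_of_existsUnique_update
    (fun m x => 0 < (x m - (Pi.single 0 1 : ℕ → LaurentSeries k) m).orderTop ∧
      conjEqCoeff p d f x m = 0) (fun m x y hxy ⟨hx, hx_eq⟩ => ⟨?_, ?_⟩) fun m x hx => ?_)
  · rw [forall_and, forall_orderTop_sub_single_pos_iff, and_assoc, and_assoc]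
  · rwa [← hxy m le_rfl]
  · rwa [← conjEqCoeff_congr hxy]
  · simpa only [Function.update_self] using
      existsUnique_conjEqCoeff_update hd hint hunit fun j hj => (hx j hj).1
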